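/- Let S be a Boolean inverse ∧-monoid. For every s ∈ S, s = φ(s) ∨ s·σ(s), this join is orthogonal (φ(s) ⊥ s·σ(s)), and φ(s·σ(s)) = 0, where φ(s) = s ∧ 1 and σ(s) is the product of the complement of φ(s) in the Boolean algebra E(S) with s⁻¹s. -/

import Mathlib

universe u

/-- An inverse monoid with zero: every element `a` has a unique generalized
inverse `a⁻¹`, and `0` is an absorbing element. -/
class InverseMonoidWithZero (S : Type u) extends Monoid S, Zero S, Inv S where
  zero_mul' : ∀ a : S, 0 * a = 0
  mul_zero' : ∀ a : S, a * 0 = 0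
  mul_inv_mul : ∀ a : S, a * a⁻¹ * a = a
  inv_mul_inv : ∀ a : S, a⁻¹ * a * a⁻¹ = a⁻¹
  inv_unique : ∀ a b : S, a * b * a = a → b * a * b = b → b = a⁻¹

section BasicDefs

variable {S : Type u}

/-- The natural partial order: `a ≤ b` iff `a = e * b` for some idempotent `e`. -/
def nle [InverseMonoidWithZero S] (a b : S) : Prop :=
  ∃ e : S, e * e = e ∧ a = e * b

/-- `a` and `b` are compatible if `a * b⁻¹` and `a⁻¹ * b` are idempotents. -/
def Compat [InverseMonoidWithZero S] (a b : S) : Prop :=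
  (a * b⁻¹) * (a * b⁻¹) = a * b⁻¹ ∧ (a⁻¹ * b) * (a⁻¹ * b) = a⁻¹ * b

/-- `a` and `b` are orthogonal if `a * b⁻¹ = 0` and `a⁻¹ * b = 0`. -/
def Orth [InverseMonoidWithZero S] (a b : S) : Prop :=
  a * b⁻¹ = 0 ∧ a⁻¹ * b = 0

end BasicDefs

/-- A distributive inverse monoid: every compatible pair has a join (for the
natural partial order), recorded by `sup`, and multiplication distributes over
these binary joins. -/
class DistributiveInverseMonoid (S : Type u) extends InverseMonoidWithZero S where
  sup : S → S → S
  le_sup_left : ∀ a b : S, Compat a b → nle a (sup a b)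
  le_sup_right : ∀ a b : S, Compat a b → nle b (sup a b)
  sup_le : ∀ a b c : S, Compat a b → nle a c → nle b c → nle (sup a b) c
  mul_sup : ∀ a b c : S, Compat a b → c * sup a b = sup (c * a) (c * b)
  sup_mul : ∀ a b c : S, Compat a b → sup a b * c = sup (a * c) (b * c)

/-- A Boolean inverse monoid: a distributive inverse monoid whose idempotents
form a Boolean algebra under the natural partial order; `compl` records the
complementation on idempotents. -/
class BooleanInverseMonoid (S : Type u) extends DistributiveInverseMonoid S where
  compl : S → S
  compl_idem : ∀ e : S, e * e = e → compl e * compl e = compl e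
  mul_compl : ∀ e : S, e * e = e → e * compl e = 0
  sup_compl : ∀ e : S, e * e = e → sup e (compl e) = 1

/-- A Boolean inverse ∧-monoid: a Boolean inverse monoid in which every pair of
elements has a meet with respect to the natural partial order. -/
class BooleanInverseMeetMonoid (S : Type u) extends BooleanInverseMonoid S where
  inf : S → S → S
  inf_le_left : ∀ a b : S, nle (inf a b) a
  inf_le_right : ∀ a b : S, nle (inf a b) b
  le_inf : ∀ a b c : S, nle c a → nle c b → nle c (inf a b)

section MoreDefs

variable {S : Type u}

/-- The join of a compatible pair. -/
def bsup [DistributiveInverseMonoid S] (a b : S) : S := DistributiveInverseMonoid.sup a b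

/-- Complementation in the Boolean algebra of idempotents. -/
def bcompl [BooleanInverseMonoid S] (e : S) : S := BooleanInverseMonoid.compl e

/-- The binary meet. -/
def binf [BooleanInverseMeetMonoid S] (a b : S) : S := BooleanInverseMeetMonoid.inf a b

/-- The fixed-point operator `φ(s) = s ∧ 1`. -/
def phi [BooleanInverseMeetMonoid S] (s : S) : S := binf s 1

/-- The support operator `σ(s) = \overline{φ(s)} ⋅ s⁻¹ s`. -/
def sigma [BooleanInverseMeetMonoid S] (s : S) : S := bcompl (phi s) * (s⁻¹ * s)

/-- An infinitesimal is a non-zero element that squares to zero. -/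
def Infinitesimal [InverseMonoidWithZero S] (a : S) : Prop := a ≠ 0 ∧ a * a = 0

/-- A (two-sided) ideal. -/
def IsMIdeal [InverseMonoidWithZero S] (I : Set S) : Prop :=
  I.Nonempty ∧ ∀ a ∈ I, ∀ s : S, s * a ∈ I ∧ a * s ∈ I

/-- A ∨-ideal: an ideal closed under joins of compatible pairs. -/
def IsVIdeal [DistributiveInverseMonoid S] (I : Set S) : Prop :=
  IsMIdeal I ∧ ∀ a ∈ I, ∀ b ∈ I, Compat a b → bsup a b ∈ I

end MoreDefs

/-- 0-simplifying: the only ∨-ideals are `{0}` and `S`. -/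
def ZeroSimplifying (S : Type u) [DistributiveInverseMonoid S] : Prop :=
  ∀ I : Set S, IsVIdeal I → I = {0} ∨ I = Set.univ

/-- 0-simple: non-trivial and the only ideals are `{0}` and `S`. -/
def ZeroSimple (S : Type u) [InverseMonoidWithZero S] : Prop :=
  (∃ s : S, s ≠ 0) ∧ ∀ I : Set S, IsMIdeal I → I = {0} ∨ I = Set.univ

/-- Fundamental: every element commuting with all idempotents is an idempotent. -/
def Fundamental (S : Type u) [InverseMonoidWithZero S] : Prop :=
  ∀ a : S, (∀ e : S, e * e = e → a * e = e * a) → a * a = a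

/-- The Boolean algebra of idempotents is atomless. -/
def IdemAtomless (S : Type u) [InverseMonoidWithZero S] : Prop :=
  ∀ e : S, e * e = e → e ≠ 0 → ∃ f : S, f * f = f ∧ f ≠ 0 ∧ nle f e ∧ f ≠ e

section Filters

variable {S : Type u}

/-- A filter in a Boolean inverse ∧-monoid: a nonempty subset closed under
binary meets and upward closed in the natural partial order. -/
def IsMFilter [BooleanInverseMeetMonoid S] (A : Set S) : Prop :=
  A.Nonempty ∧ (∀ a ∈ A, ∀ b ∈ A, binf a b ∈ A) ∧ ∀ a ∈ A, ∀ b : S, nle a b → b ∈ A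

/-- An ultrafilter: a maximal proper filter. -/
def IsMUltrafilter [BooleanInverseMeetMonoid S] (A : Set S) : Prop :=
  IsMFilter A ∧ (0 : S) ∉ A ∧ ∀ B : Set S, IsMFilter B → (0 : S) ∉ B → A ⊆ B → A = B

/-- A filter of the Boolean algebra of idempotents (meet of idempotents is
their product). -/
def IsIdemFilter [InverseMonoidWithZero S] (F : Set S) : Prop :=
  F.Nonempty ∧ (∀ e ∈ F, e * e = e) ∧ (∀ e ∈ F, ∀ f ∈ F, e * f ∈ F) ∧
    ∀ e ∈ F, ∀ f : S, f * f = f → nle e f → f ∈ F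

/-- An ultrafilter of the Boolean algebra of idempotents. -/
def IsIdemUltrafilter [InverseMonoidWithZero S] (F : Set S) : Prop :=
  IsIdemFilter F ∧ (0 : S) ∉ F ∧
    ∀ G : Set S, IsIdemFilter G → (0 : S) ∉ G → F ⊆ G → F = G

end Filters

section PencilDefs

variable {S : Type u}

/-- `Preceq e f`: there is a pencil from `e` to `f`, i.e. finitely many
elements `x₁, …, xₘ` with `r(xᵢ) ≤ f` for all `i` and `e = ⋁ d(xᵢ)`
(a least upper bound for the natural partial order). -/
def Preceq [DistributiveInverseMonoid S] (e f : S) : Prop :=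
  ∃ l : List S, l ≠ [] ∧ (∀ x ∈ l, nle (x * x⁻¹) f) ∧
    (∀ x ∈ l, nle (x⁻¹ * x) e) ∧ ∀ c : S, (∀ x ∈ l, nle (x⁻¹ * x) c) → nle e c

/-- Piecewise factorizable: every element is a finite join of elements each of
which lies beneath a unit. -/
def PiecewiseFactorizable (S : Type u) [DistributiveInverseMonoid S] : Prop :=
  ∀ s : S, ∃ l : List S, l ≠ [] ∧ (∀ x ∈ l, ∃ g : S, IsUnit g ∧ nle x g) ∧
    (∀ x ∈ l, nle x s) ∧ ∀ c : S, (∀ x ∈ l, nle x c) → nle s c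

/-- A properly infinite idempotent. -/
def ProperlyInfinite [DistributiveInverseMonoid S] (e : S) : Prop :=
  ∃ x y : S, x⁻¹ * x = e ∧ y⁻¹ * y = e ∧ Orth (x * x⁻¹) (y * y⁻¹) ∧
    nle (bsup (x * x⁻¹) (y * y⁻¹)) e

end PencilDefs

/-- Purely infinite: every non-zero idempotent is properly infinite. -/
def PurelyInfinite (S : Type u) [DistributiveInverseMonoid S] : Prop :=
  ∀ e : S, e * e = e → e ≠ 0 → ProperlyInfinite e

/-!
Since `φ(s)` is an idempotent below `s`, we have `s φ(s) = φ(s)`, and multiplying `s` on the right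
by `1 = φ(s) ∨ \overline{φ(s)}` gives `s = φ(s) ∨ s \overline{φ(s)}`, an orthogonal join because
`φ(s) \overline{φ(s)} = 0`; moreover `s σ(s) = s \overline{φ(s)}`. Finally `f = φ(s σ(s))` is an
idempotent below `s \overline{φ(s)} ≤ s`, hence below `φ(s)`, so `f = φ(s) s \overline{φ(s)} f = 0`.
-/

namespace InverseMonoidWithZero

variable {S : Type*} [InverseMonoidWithZero S]

theorem inv_inv (a : S) : a⁻¹⁻¹ = a :=
  (inv_unique a⁻¹ a (inv_mul_inv a) (mul_inv_mul a)).symm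

theorem inv_eq_self_of_isIdempotentElem {e : S} (he : IsIdempotentElem e) : e⁻¹ = e :=
  (inv_unique e e (by rw [he.eq, he.eq]) (by rw [he.eq, he.eq])).symm

theorem isIdempotentElem_inv_mul_self (a : S) : IsIdempotentElem (a⁻¹ * a) := by
  rw [IsIdempotentElem, ← mul_assoc, inv_mul_inv]

theorem isIdempotentElem_mul_inv_self (a : S) : IsIdempotentElem (a * a⁻¹) := by
  rw [IsIdempotentElem, ← mul_assoc, mul_inv_mul]

theorem isIdempotentElem_zero : IsIdempotentElem (0 : S) :=
  zero_mul' 0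

/-- With `x = (ef)⁻¹`, the element `f x e` is also an inverse of `ef`, so `x = f x e`; this makes
`x` idempotent, hence self-inverse, hence equal to `ef`. -/
theorem isIdempotentElem_mul {e f : S} (he : IsIdempotentElem e) (hf : IsIdempotentElem f) :
    IsIdempotentElem (e * f) := by
  set x := (e * f)⁻¹
  have hfxe : f * x * e = x := by
    refine inv_unique (e * f) (f * x * e) ?_ ?_
    · calc e * f * (f * x * e) * (e * f) = (e * f) * x * (e * f) := by
            simp only [mul_assoc, he.eq, hf.eq, ← mul_assoc e e, ← mul_assoc f f]
        _ = e * f := mul_inv_mul _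
    · calc f * x * e * (e * f) * (f * x * e) = f * (x * (e * f) * x) * e := by
            simp only [mul_assoc, he.eq, hf.eq, ← mul_assoc e e, ← mul_assoc f f]
        _ = f * x * e := by rw [inv_mul_inv, mul_assoc]
  have hx : IsIdempotentElem x := by
    calc x * x = f * (x * (e * f) * x) * e := by
          conv_lhs => rw [← hfxe]
          simp only [mul_assoc]
      _ = x := by rw [inv_mul_inv, hfxe]
  rwa [← inv_inv (e * f), inv_eq_self_of_isIdempotentElem hx]

theorem commute_of_isIdempotentElem {e f : S} (he : IsIdempotentElem e)
    (hf : IsIdempotentElem f) : Commute e f := by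
  have hef := isIdempotentElem_mul he hf
  have hfe := isIdempotentElem_mul hf he
  have : f * e = (e * f)⁻¹ := by
    refine inv_unique (e * f) (f * e) ?_ ?_
    · calc e * f * (f * e) * (e * f) = (e * f) * (e * f) := by
            simp only [mul_assoc, he.eq, hf.eq, ← mul_assoc e e, ← mul_assoc f f]
        _ = e * f := hef.eq
    · calc f * e * (e * f) * (f * e) = (f * e) * (f * e) := by
            simp only [mul_assoc, he.eq, hf.eq, ← mul_assoc e e, ← mul_assoc f f]
        _ = f * e := hfe.eq
  rw [Commute, SemiconjBy, this, inv_eq_self_of_isIdempotentElem hef]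

theorem mul_inv_rev (a b : S) : (a * b)⁻¹ = b⁻¹ * a⁻¹ := by
  have hcomm := commute_of_isIdempotentElem (isIdempotentElem_mul_inv_self b)
    (isIdempotentElem_inv_mul_self a)
  refine (inv_unique (a * b) (b⁻¹ * a⁻¹) ?_ ?_).symm
  · calc a * b * (b⁻¹ * a⁻¹) * (a * b) = a * ((b * b⁻¹) * (a⁻¹ * a)) * b := by
          simp only [mul_assoc]
      _ = (a * a⁻¹ * a) * (b * b⁻¹ * b) := by rw [hcomm.eq]; simp only [mul_assoc]
      _ = a * b := by rw [mul_inv_mul, mul_inv_mul]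
  · calc b⁻¹ * a⁻¹ * (a * b) * (b⁻¹ * a⁻¹) = b⁻¹ * ((a⁻¹ * a) * (b * b⁻¹)) * a⁻¹ := by
          simp only [mul_assoc]
      _ = (b⁻¹ * b * b⁻¹) * (a⁻¹ * a * a⁻¹) := by rw [← hcomm.eq]; simp only [mul_assoc]
      _ = b⁻¹ * a⁻¹ := by rw [inv_mul_inv, inv_mul_inv]

end InverseMonoidWithZero

open InverseMonoidWithZero

section NaturalOrder

variable {S : Type*} [InverseMonoidWithZero S] {a b c e : S}

theorem nle.trans (hab : nle a b) (hbc : nle b c) : nle a c := by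
  obtain ⟨f, hf, rfl⟩ := hab
  obtain ⟨g, hg, rfl⟩ := hbc
  exact ⟨f * g, isIdempotentElem_mul hf hg, (mul_assoc f g c).symm⟩

theorem nle.eq_mul_inv_self_mul (h : nle a b) : a = a * a⁻¹ * b := by
  obtain ⟨f, hf, rfl⟩ := h
  have hcomm := commute_of_isIdempotentElem (isIdempotentElem_mul_inv_self b) hf
  calc f * b = (f * f) * (b * b⁻¹ * b) := by rw [hf, mul_inv_mul]
    _ = f * ((b * b⁻¹) * f) * b := by rw [hcomm.eq]; simp only [mul_assoc]
    _ = f * b * (f * b)⁻¹ * b := by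
        rw [InverseMonoidWithZero.mul_inv_rev, inv_eq_self_of_isIdempotentElem hf]
        simp only [mul_assoc]

theorem nle.eq_mul_inv_mul_self (h : nle a b) : a = b * (a⁻¹ * a) := by
  obtain ⟨f, hf, rfl⟩ := h
  have hcomm := commute_of_isIdempotentElem (isIdempotentElem_mul_inv_self b) hf
  calc f * b = (f * (b * b⁻¹)) * b := by rw [mul_assoc, mul_inv_mul]
    _ = b * (b⁻¹ * ((f * f) * b)) := by rw [← hcomm.eq, hf]; simp only [mul_assoc]
    _ = b * ((f * b)⁻¹ * (f * b)) := by
        rw [InverseMonoidWithZero.mul_inv_rev, inv_eq_self_of_isIdempotentElem hf]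
        simp only [mul_assoc]

theorem nle.mul_eq_left_of_isIdempotentElem (h : nle e b) (he : IsIdempotentElem e) :
    e * b = e := by
  have := h.eq_mul_inv_self_mul
  rwa [inv_eq_self_of_isIdempotentElem he, he.eq, eq_comm] at this

theorem nle.mul_eq_right_of_isIdempotentElem (h : nle e b) (he : IsIdempotentElem e) :
    b * e = e := by
  have := h.eq_mul_inv_mul_self
  rwa [inv_eq_self_of_isIdempotentElem he, he.eq, eq_comm] at this

theorem isIdempotentElem_of_nle_one (h : nle e 1) : IsIdempotentElem e := by
  obtain ⟨f, hf, rfl⟩ := h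
  rwa [mul_one]

theorem mul_nle_self_of_isIdempotentElem (a : S) (he : IsIdempotentElem e) : nle (a * e) a := by
  have hcomm := commute_of_isIdempotentElem (isIdempotentElem_inv_mul_self a) he
  refine ⟨a * e * a⁻¹, ?_, ?_⟩
  · calc a * e * a⁻¹ * (a * e * a⁻¹) = a * ((a⁻¹ * a) * (e * e)) * a⁻¹ := by
          rw [← mul_assoc (a⁻¹ * a), hcomm.eq]; simp only [mul_assoc]
      _ = a * e * a⁻¹ := by rw [he.eq, ← mul_assoc a, ← mul_assoc a, mul_inv_mul]
  · calc a * e = a * ((a⁻¹ * a) * e) := by rw [← mul_assoc, ← mul_assoc, mul_inv_mul]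
      _ = a * e * a⁻¹ * a := by rw [hcomm.eq]; simp only [mul_assoc]

end NaturalOrder

section Orthogonality

variable {S : Type*} [InverseMonoidWithZero S] {a b e f : S}

theorem Orth.compat (h : Orth a b) : Compat a b := by
  rw [Compat, h.1, h.2]
  exact ⟨isIdempotentElem_zero, isIdempotentElem_zero⟩

theorem orth_mul_of_nle (he : IsIdempotentElem e) (hf : IsIdempotentElem f) (hea : nle e a)
    (hef : e * f = 0) : Orth e (a * f) := by
  constructor
  · rw [InverseMonoidWithZero.mul_inv_rev, inv_eq_self_of_isIdempotentElem hf, ← mul_assoc, hef,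
      zero_mul']
  · rw [inv_eq_self_of_isIdempotentElem he, ← mul_assoc, hea.mul_eq_left_of_isIdempotentElem he,
      hef]

end Orthogonality

section Boolean

variable {S : Type*} [BooleanInverseMonoid S] {a e : S}

theorem isIdempotentElem_bcompl (he : IsIdempotentElem e) : IsIdempotentElem (bcompl e) :=
  BooleanInverseMonoid.compl_idem e he

theorem mul_bcompl_eq_zero (he : IsIdempotentElem e) : e * bcompl e = 0 :=
  BooleanInverseMonoid.mul_compl e he

theorem bsup_bcompl (he : IsIdempotentElem e) : bsup e (bcompl e) = 1 :=
  BooleanInverseMonoid.sup_compl e he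

theorem orth_bcompl (he : IsIdempotentElem e) : Orth e (bcompl e) := by
  rw [Orth, inv_eq_self_of_isIdempotentElem (isIdempotentElem_bcompl he),
    inv_eq_self_of_isIdempotentElem he]
  exact ⟨mul_bcompl_eq_zero he, mul_bcompl_eq_zero he⟩

theorem eq_bsup_mul_bcompl (he : IsIdempotentElem e) (hea : nle e a) :
    a = bsup e (a * bcompl e) :=
  calc a = a * bsup e (bcompl e) := by rw [bsup_bcompl he, mul_one]
    _ = bsup (a * e) (a * bcompl e) :=
        DistributiveInverseMonoid.mul_sup e (bcompl e) a (orth_bcompl he).compat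
    _ = bsup e (a * bcompl e) := by rw [hea.mul_eq_right_of_isIdempotentElem he]

theorem orth_mul_bcompl (he : IsIdempotentElem e) (hea : nle e a) : Orth e (a * bcompl e) :=
  orth_mul_of_nle he (isIdempotentElem_bcompl he) hea (mul_bcompl_eq_zero he)

end Boolean

section FixedPoints

variable {S : Type*} [BooleanInverseMeetMonoid S] {a b : S}

theorem phi_nle_self (a : S) : nle (phi a) a :=
  BooleanInverseMeetMonoid.inf_le_left a 1

theorem isIdempotentElem_phi (a : S) : IsIdempotentElem (phi a) :=
  isIdempotentElem_of_nle_one (BooleanInverseMeetMonoid.inf_le_right a 1)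

theorem phi_nle_phi (h : nle a b) : nle (phi a) (phi b) :=
  BooleanInverseMeetMonoid.le_inf b 1 (phi a) ((phi_nle_self a).trans h)
    (BooleanInverseMeetMonoid.inf_le_right a 1)

theorem mul_sigma (a : S) : a * sigma a = a * bcompl (phi a) := by
  have hc := isIdempotentElem_bcompl (isIdempotentElem_phi a)
  rw [sigma, (commute_of_isIdempotentElem hc (isIdempotentElem_inv_mul_self a)).eq,
    ← mul_assoc, ← mul_assoc, mul_inv_mul]

theorem phi_mul_bcompl_phi (a : S) : phi (a * bcompl (phi a)) = 0 := by
  set e := phi a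
  set f := phi (a * bcompl e)
  have he := isIdempotentElem_phi a
  have hf := isIdempotentElem_phi (a * bcompl e)
  have hfe : nle f e :=
    phi_nle_phi (mul_nle_self_of_isIdempotentElem a (isIdempotentElem_bcompl he))
  calc f = e * (a * bcompl e * f) := by
        rw [(phi_nle_self _).mul_eq_right_of_isIdempotentElem hf,
          hfe.mul_eq_right_of_isIdempotentElem hf]
    _ = (e * a) * bcompl e * f := by simp only [mul_assoc]
    _ = 0 := by
        rw [(phi_nle_self a).mul_eq_left_of_isIdempotentElem he,
          mul_bcompl_eq_zero he, zero_mul']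

end FixedPoints

/-- In a Boolean inverse ∧-monoid, `s = φ(s) ∨ s·σ(s)`, the
join being orthogonal, and `φ(s·σ(s)) = 0`. -/
theorem statement13 (S : Type u) [BooleanInverseMeetMonoid S] (s : S) :
    s = bsup (phi s) (s * sigma s) ∧
    Orth (phi s) (s * sigma s) ∧
    phi (s * sigma s) = 0 := by
  rw [mul_sigma]
  exact ⟨eq_bsup_mul_bcompl (isIdempotentElem_phi s) (phi_nle_self s),
    orth_mul_bcompl (isIdempotentElem_phi s) (phi_nle_self s), phi_mul_bcompl_phi s⟩
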